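/- For any nonzero integer n and nonzero complex number a, the linear map d_{n,a} := φ_n∘τ_a − id_Vir is a 1-differential operator on the Virasoro algebra; moreover d_{0,0} := −id_Vir is also a 1-differential operator. -/

import Mathlib

/-!
A linear map `d` is a 1-differential operator exactly when `id + d` preserves the bracket, so
it suffices to show that `φ_n ∘ τ_a` is a Lie algebra endomorphism (and, for `d_{0,0}`, that `0`
is one). On `L_i, L_j` this is a direct computation: the `L_{n(i+j)}`-coefficients agree because
`τ_a` is multiplicative in the index, and for `i + j = 0` the shift `-(n² - 1)/24 · C` in `φ_n`
turns the cocycle `n (i³ - i)/12` into `((ni)³ - ni)/(12 n²)`.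
-/

def VirRel {V : Type*} [LieRing V] [LieAlgebra ℂ V] (L : ℤ → V) (C : V) : Prop :=
  (∀ m n : ℤ, ⁅L m, L n⁆ = ((n : ℂ) - (m : ℂ)) • L (m + n)
      + (if m + n = 0 then ((m : ℂ) ^ 3 - (m : ℂ)) / 12 else 0) • C) ∧
  ∀ m : ℤ, ⁅C, L m⁆ = 0

def PhiTau {V : Type*} [LieRing V] [LieAlgebra ℂ V] (L : ℤ → V) (C : V)
    (n : ℤ) (a : ℂ) (f : V →ₗ[ℂ] V) : Prop :=
  (∀ i : ℤ, f (L i) = (a ^ i / (n : ℂ)) •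
      (L (n * i) - (if i = 0 then ((n : ℂ) ^ 2 - 1) / 24 else 0) • C)) ∧
  f C = (n : ℂ) • C

section OneDifferential

variable {R L : Type*} [CommRing R] [LieRing L] [LieAlgebra R L]

def LinearMap.IsOneDifferential (d : L →ₗ[R] L) : Prop :=
  ∀ x y : L, d ⁅x, y⁆ = ⁅d x, y⁆ + ⁅x, d y⁆ + ⁅d x, d y⁆

theorem LinearMap.isOneDifferential_sub_id_iff (f : L →ₗ[R] L) :
    (f - LinearMap.id).IsOneDifferential ↔ ∀ x y : L, f ⁅x, y⁆ = ⁅f x, f y⁆ := by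
  refine forall₂_congr fun x y => ?_
  simp only [LinearMap.sub_apply, LinearMap.id_apply, sub_lie, lie_sub]
  rw [show ⁅f x, y⁆ - ⁅x, y⁆ + (⁅x, f y⁆ - ⁅x, y⁆) + (⁅f x, f y⁆ - ⁅x, f y⁆ - (⁅f x, y⁆ - ⁅x, y⁆))
      = ⁅f x, f y⁆ - ⁅x, y⁆ by abel, sub_left_inj]

theorem LinearMap.isOneDifferential_neg_id : (-LinearMap.id : L →ₗ[R] L).IsOneDifferential := by
  simpa using (LinearMap.isOneDifferential_sub_id_iff (0 : L →ₗ[R] L)).mpr (by simp)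

end OneDifferential

section Basis

variable {R L L' ι : Type*} [CommRing R] [LieRing L] [LieAlgebra R L] [LieRing L'] [LieAlgebra R L']

theorem lie_eq_zero_of_basis (b : Module.Basis ι R L) {z : L} (h : ∀ i, ⁅z, b i⁆ = 0) (x : L) :
    ⁅z, x⁆ = 0 :=
  LinearMap.congr_fun (b.ext (f₁ := LieModule.toEnd R L L z) (f₂ := 0) h) x

theorem LinearMap.map_lie_of_basis (b : Module.Basis ι R L) (f : L →ₗ[R] L')
    (h : ∀ i j, f ⁅b i, b j⁆ = ⁅f (b i), f (b j)⁆) (x y : L) : f ⁅x, y⁆ = ⁅f x, f y⁆ := by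
  have hB : (LieModule.toEnd R L L : L →ₗ[R] Module.End R L).compr₂ f =
      (LieModule.toEnd R L' L' : L' →ₗ[R] Module.End R L').compl₁₂ f f :=
    LinearMap.ext_basis b b h
  exact LinearMap.congr_fun₂ hB x y

end Basis

section Virasoro

variable {V : Type*} [LieRing V] [LieAlgebra ℂ V] {L : ℤ → V} {C : V}

theorem VirRel.lie_central (hrel : VirRel L C) (b : Module.Basis (Option ℤ) ℂ V)
    (hbL : ∀ i : ℤ, b (some i) = L i) (hbC : b none = C) (v : V) : ⁅C, v⁆ = 0 := by
  refine lie_eq_zero_of_basis b (fun i => ?_) v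
  cases i with
  | none => rw [hbC, lie_self]
  | some i => rw [hbL, hrel.2]

theorem PhiTau.map_lie_L (hrel : VirRel L C) {n : ℤ} (hn : n ≠ 0) {a : ℂ} (ha : a ≠ 0)
    {f : V →ₗ[ℂ] V} (hf : PhiTau L C n a f) (hC : ∀ v : V, ⁅C, v⁆ = 0) (i j : ℤ) :
    f ⁅L i, L j⁆ = ⁅f (L i), f (L j)⁆ := by
  have hC' : ∀ v, ⁅v, C⁆ = 0 := fun v => by rw [← lie_skew, hC, neg_zero]
  rw [hrel.1, map_add, map_smul, map_smul, hf.1, hf.2, hf.1, hf.1]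
  simp only [lie_smul, smul_lie, lie_sub, sub_lie, hC, hC', hrel.1, smul_zero, sub_zero,
    mul_eq_zero, hn, false_or, ← mul_add, zpow_add₀ ha]
  by_cases h : i + j = 0
  · obtain rfl : j = -i := by omega
    simp only [if_pos h, zpow_neg]
    match_scalars
    · field_simp [hn, zpow_ne_zero i ha]
    · field_simp [hn, zpow_ne_zero i ha]
      ring
  · simp only [if_neg h]
    match_scalars
    · field_simp [hn]
    · simp

end Virasoro

/-- `d_{n,a} = φ_n∘τ_a − id` is a 1-differential operator on the
Virasoro algebra, and so is `d_{0,0} = −id`. -/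
theorem stmt_5 {V : Type*} [LieRing V] [LieAlgebra ℂ V]
    (L : ℤ → V) (C : V)
    (b : Module.Basis (Option ℤ) ℂ V) (hbL : ∀ i : ℤ, b (some i) = L i) (hbC : b none = C)
    (hrel : VirRel L C)
    (n : ℤ) (hn : n ≠ 0) (a : ℂ) (ha : a ≠ 0)
    (f : V →ₗ[ℂ] V) (hf : PhiTau L C n a f) :
    (∀ x y : V, (f - (LinearMap.id : V →ₗ[ℂ] V)) ⁅x, y⁆ =
        ⁅(f - (LinearMap.id : V →ₗ[ℂ] V)) x, y⁆ +
        ⁅x, (f - (LinearMap.id : V →ₗ[ℂ] V)) y⁆ +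
        ⁅(f - (LinearMap.id : V →ₗ[ℂ] V)) x, (f - (LinearMap.id : V →ₗ[ℂ] V)) y⁆) ∧
    (∀ x y : V, (-(LinearMap.id : V →ₗ[ℂ] V)) ⁅x, y⁆ =
        ⁅(-(LinearMap.id : V →ₗ[ℂ] V)) x, y⁆ +
        ⁅x, (-(LinearMap.id : V →ₗ[ℂ] V)) y⁆ +
        ⁅(-(LinearMap.id : V →ₗ[ℂ] V)) x, (-(LinearMap.id : V →ₗ[ℂ] V)) y⁆) := by
  have hC := VirRel.lie_central hrel b hbL hbC
  have hC' : ∀ v, ⁅v, C⁆ = 0 := fun v => by rw [← lie_skew, hC, neg_zero]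
  have hhom : ∀ x y : V, f ⁅x, y⁆ = ⁅f x, f y⁆ := by
    refine f.map_lie_of_basis b fun i j => ?_
    cases i with
    | none => rw [hbC, hC, hf.2, smul_lie, hC, smul_zero, map_zero]
    | some i =>
      cases j with
      | none => rw [hbC, hC', hf.2, lie_smul, hC', smul_zero, map_zero]
      | some j => rw [hbL, hbL, PhiTau.map_lie_L hrel hn ha hf hC]
  exact ⟨(f.isOneDifferential_sub_id_iff).mpr hhom, LinearMap.isOneDifferential_neg_id⟩
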